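/- Let κ be a weakly compact cardinal. If A ⊆ 2^κ is κ-strongly null, then for every κ-meagre set F ⊆ 2^κ there exists x ∈ 2^κ such that (x + A) ∩ F = ∅. -/

import Mathlib

noncomputable section

open Cardinal Set

namespace GenSp

/-- The index set: a canonical type of order type `κ.ord`. -/
abbrev I (κ : Cardinal.{0}) : Type := κ.ord.ToType

variable (κ : Cardinal.{0}) (A : Type)

/-- The generalized space `A^κ`. -/
abbrev Sp : Type := I κ → A

/-- The basic clopen set `[x ↾ ξ]`: all functions agreeing with `x` below `ξ`. -/
def cyl (x : Sp κ A) (ξ : I κ) : Set (Sp κ A) := {y | ∀ β < ξ, y β = x β}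

/-- The bounded topology on `A^κ`, generated by the basic clopen sets. -/
def bt : TopologicalSpace (Sp κ A) :=
  .generateFrom {S | ∃ x ξ, S = cyl κ A x ξ}

/-- Open in the bounded topology. -/
def OpenK (s : Set (Sp κ A)) : Prop := @IsOpen _ (bt κ A) s

/-- Closed in the bounded topology. -/
def ClosedK (s : Set (Sp κ A)) : Prop := @IsClosed _ (bt κ A) s

/-- Nowhere dense in the bounded topology. -/
def NwdK (s : Set (Sp κ A)) : Prop := @IsNowhereDense _ (bt κ A) s

/-- κ-meagre: a union of (at most) κ nowhere dense sets. -/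
def MeagreK (s : Set (Sp κ A)) : Prop :=
  ∃ f : I κ → Set (Sp κ A), (∀ i, NwdK κ A (f i)) ∧ s = ⋃ i, f i

/-- κ-strongly null set. -/
def SNullK (S : Set (Sp κ A)) : Prop :=
  ∀ ξ : I κ → I κ, ∃ a : I κ → Sp κ A, S ⊆ ⋃ α, cyl κ A (a α) (ξ α)

/-- Coordinatewise addition over `ℤ₂` (translation by `x`). -/
def xadd (x y : Sp κ Bool) : Sp κ Bool := fun i => xor (x i) (y i)

/-- The covering number of the κ-meagre ideal. -/
def covM : Cardinal :=
  sInf {c | ∃ 𝒜 : Set (Set (Sp κ A)), #𝒜 = c ∧ (∀ s ∈ 𝒜, MeagreK κ A s) ∧ ⋃₀ 𝒜 = Set.univ}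

/-- The cofinality of the κ-meagre ideal. -/
def cofM : Cardinal :=
  sInf {c | ∃ 𝒜 : Set (Set (Sp κ A)), #𝒜 = c ∧ (∀ s ∈ 𝒜, MeagreK κ A s) ∧
    ∀ t, MeagreK κ A t → ∃ s ∈ 𝒜, t ⊆ s}

/-- κ is weakly compact: uncountable and with the partition property κ → (κ)²₂. -/
def IsWeaklyCompact (κ : Cardinal.{0}) : Prop :=
  ℵ₀ < κ ∧ ∀ c : I κ → I κ → Bool, ∃ H : Set (I κ), #H = κ ∧
    ∃ b : Bool, ∀ i ∈ H, ∀ j ∈ H, i < j → c i j = b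

/-- `S` is κ-meagre relative to `P` (in the subspace topology). -/
def MeagreInK (P S : Set (Sp κ A)) : Prop :=
  ∃ f : I κ → Set P,
    (∀ i, @IsNowhereDense _ (TopologicalSpace.induced Subtype.val (bt κ A)) (f i)) ∧
    {x : P | (x : Sp κ A) ∈ S} = ⋃ i, f i

/-- Perfect set in the bounded topology. -/
def PerfK (P : Set (Sp κ A)) : Prop := @Perfect _ (bt κ A) P

/-- Perfectly κ-meagre set. -/
def PMeagreK (S : Set (Sp κ A)) : Prop := ∀ P, PerfK κ A P → MeagreInK κ A P S

/-- κ-λ-set. -/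
def KLambdaSet (S : Set (Sp κ A)) : Prop :=
  ∀ B ⊆ S, #B ≤ κ → ∃ G : I κ → Set (Sp κ A),
    (∀ i, OpenK κ A (G i)) ∧ (⋂ i, G i) ∩ S = B

/-- κ-σ-set. -/
def KSigmaSet (S : Set (Sp κ A)) : Prop :=
  ∀ F : I κ → Set (Sp κ A), (∀ i, ClosedK κ A (F i)) →
    ∃ G : I κ → Set (Sp κ A), (∀ i, OpenK κ A (G i)) ∧
      S ∩ (⋃ i, F i) = S ∩ (⋂ i, G i)

/-- κ-γ-set: every open (proper) κ-cover contains a κ-γ-subcover of size κ. -/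
def KGammaSet (X : Set (Sp κ A)) : Prop :=
  ∀ 𝒰 : Set (Set (Sp κ A)), (∀ U ∈ 𝒰, OpenK κ A U) → X ∉ 𝒰 →
    (∀ C ⊆ X, #C < κ → ∃ U ∈ 𝒰, C ⊆ U) →
    ∃ U : I κ → Set (Sp κ A), (∀ α, U α ∈ 𝒰) ∧
      X ⊆ ⋃ α, ⋂ β, ⋂ (_ : α < β), U β

/-- A (proper) open cover of `X` of size κ, indexed by `I κ`. -/
def IsOCovSeq (X : Set (Sp κ A)) (U : I κ → Set (Sp κ A)) : Prop :=
  (∀ α, OpenK κ A (U α)) ∧ (∀ α, U α ≠ X) ∧ X ⊆ ⋃ α, U α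

/-- A (proper) κ-γ-cover of `X`, indexed by `I κ`. -/
def IsGammaCovSeq (X : Set (Sp κ A)) (U : I κ → Set (Sp κ A)) : Prop :=
  (∀ α, OpenK κ A (U α)) ∧ (∀ α, U α ≠ X) ∧
    X ⊆ ⋃ α, ⋂ β, ⋂ (_ : α < β), U β

/-- The cover `U` is essentially of size κ: no subfamily of size `< κ` covers `X`. -/
def EssK (X : Set (Sp κ A)) (U : I κ → Set (Sp κ A)) : Prop :=
  ∀ s : Set (I κ), #s < κ → ¬ X ⊆ ⋃ β ∈ s, U β

/-- The selection principle `S₁^κ(Γ_κ, Γ_κ)`. -/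
def S1GammaGamma (X : Set (Sp κ A)) : Prop :=
  ∀ 𝒰 : I κ → I κ → Set (Sp κ A), (∀ α, IsGammaCovSeq κ A X (𝒰 α)) →
    ∃ f : I κ → I κ, IsGammaCovSeq κ A X (fun α => 𝒰 α (f α))

/-- The κ-Hurewicz property `U^κ_{<κ}(O_κ, Γ_κ)`. -/
def KHurewicz (X : Set (Sp κ A)) : Prop :=
  ∀ 𝒰 : I κ → I κ → Set (Sp κ A), (∀ α, IsOCovSeq κ A X (𝒰 α)) →
    (∀ α, EssK κ A X (𝒰 α)) →
    ∃ V : I κ → Set (I κ), (∀ α, #(V α) < κ) ∧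
      IsGammaCovSeq κ A X (fun α => ⋃ β ∈ V α, 𝒰 α β)

/-- The κ-Menger property `U^κ_{<κ}(O_κ, O_κ)`. -/
def KMenger (X : Set (Sp κ A)) : Prop :=
  ∀ 𝒰 : I κ → I κ → Set (Sp κ A), (∀ α, IsOCovSeq κ A X (𝒰 α)) →
    (∀ α, EssK κ A X (𝒰 α)) →
    ∃ V : I κ → Set (I κ), (∀ α, #(V α) < κ) ∧
      IsOCovSeq κ A X (fun α => ⋃ β ∈ V α, 𝒰 α β)

/-- The κ-Rothberger property `S₁^κ(O_κ, O_κ)`. -/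
def KRothberger (X : Set (Sp κ A)) : Prop :=
  ∀ 𝒰 : I κ → I κ → Set (Sp κ A), (∀ α, IsOCovSeq κ A X (𝒰 α)) →
    ∃ f : I κ → I κ, IsOCovSeq κ A X (fun α => 𝒰 α (f α))

/-- Closed unbounded subset of `I κ`. -/
def IsClubK (S : Set (I κ)) : Prop :=
  (∀ a : I κ, ∃ b ∈ S, a < b) ∧
  (∀ a : I κ, (∃ b, b < a) → (∀ b < a, ∃ c ∈ S, b < c ∧ c < a) → a ∈ S)

/-- Stationary subset of `I κ`. -/
def IsStatK (S : Set (I κ)) : Prop :=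
  ∀ C : Set (I κ), IsClubK κ C → (S ∩ C).Nonempty

/-- The diamond principle `◇_κ(E)`. -/
def DiamondK (E : Set (I κ)) : Prop :=
  ∃ s : I κ → Set (I κ), (∀ α, s α ⊆ Iio α) ∧
    ∀ X : Set (I κ), IsStatK κ {α | α ∈ E ∧ X ∩ Iio α = s α}

/-- The guessing principle `◇_κ(E, 2^κ, NS_κ)`. -/
def DiamondFunK (E : Set (I κ)) : Prop :=
  ∃ s : I κ → Sp κ Bool,
    ∀ x : Sp κ Bool, IsStatK κ {α | α ∈ E ∧ ∀ β < α, x β = s α β}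

/-- `S` is `X`-small. -/
def XSmall (X : Set (I κ)) (S : Set (Sp κ A)) : Prop :=
  ∃ a : I κ → Sp κ A, S ⊆ ⋃ α ∈ X, cyl κ A (a α) α

/-- `S` is small in `A^κ`. -/
def SmallK (S : Set (Sp κ A)) : Prop :=
  ∃ lam : Cardinal, lam < κ ∧ ∀ α : I κ, ∃ T : Set (Sp κ A),
    #T ≤ lam ∧ S ⊆ ⋃ x ∈ T, cyl κ A x α

/-!
A weakly compact `κ` is inaccessible: the partition property gives regularity directly, and
Sierpiński's argument (a lexicographically monotone sequence in `2^η` has fewer than `κ` terms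
once `2^δ < κ` for all `δ < η`) gives `2^λ < κ` for `λ < κ`.

Write the meagre set as `⋃ f m` with `f m` nowhere dense and list each `f m` `κ` times as
`f (p n)`, through a bijection `κ ≃ κ × κ`. Since there are fewer than `κ` patterns below any
level, there are levels `k n` such that every point, changed only above the earlier levels,
gets its `k n`-cylinder disjoint from `f (p n)`. Strong nullness, applied to the levels along
each fibre of `p`, covers `S` by cylinders `[a n ↾ k n]` so that every `y ∈ S` lies, for each
`m`, in one with `p n = m`. Recursively choose coherent `t n` with `[(t n + a n) ↾ k n]`
disjoint from `f (p n)`, and glue them to `x`: then `x + y ∈ [(t n + a n) ↾ k n]` misses `f m`.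
-/

theorem exists_fun_forall_of_step {α C : Type*} [Preorder α] [WellFoundedLT α] [Nonempty C]
    (P : α → (α → C) → C → Prop)
    (hP : ∀ n g g', (∀ m < n, g m = g' m) → ∀ c, P n g c → P n g' c)
    (step : ∀ n g, (∀ m < n, P m g (g m)) → ∃ c, P n g c) :
    ∃ F : α → C, ∀ n, P n F (F n) := by
  classical
  let extend (n : α) (prev : ∀ m, m < n → C) : α → C :=
    fun m => if h : m < n then prev m h else Classical.arbitrary C
  let F : α → C := IsWellFounded.fix (· < ·) fun n prev =>
    if h : ∀ m < n, P m (extend n prev) (extend n prev m) then (step n _ h).choose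
    else Classical.arbitrary C
  refine ⟨F, fun n => ?_⟩
  induction n using WellFoundedLT.induction with
  | _ n ih =>
  set g := extend n fun m _ => F m
  have hg : ∀ m < n, g m = F m := fun m hm => dif_pos hm
  have hprev : ∀ m < n, P m g (g m) := fun m hm => by
    rw [hg m hm]
    exact hP m F g (fun l hl => (hg l (hl.trans hm)).symm) _ (ih m hm)
  have hFn : F n = (step n g hprev).choose := by
    rw [show F n = _ from IsWellFounded.fix_eq _ _ n]
    exact dif_pos hprev
  exact hP n g F (fun m hm => hg m hm) _ (hFn ▸ (step n g hprev).choose_spec)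

theorem Pi.toLex_lt_toLex_iff {ι : Type*} [LT ι] {β : Type*} [LT β] {x y : ι → β} :
    toLex x < toLex y ↔ ∃ i, (∀ j < i, x j = y j) ∧ x i < y i := Iff.rfl

theorem toLex_not_lt_toLex_not {ι : Type*} [LT ι] {x y : ι → Bool} :
    toLex (fun i => !x i) < toLex (fun i => !y i) ↔ toLex y < toLex x := by
  simp only [Pi.toLex_lt_toLex_iff, Bool.not_inj_iff, Bool.lt_iff, Bool.not_eq_false',
    Bool.not_eq_true', eq_comm (a := x _)]
  constructor <;> rintro ⟨i, h1, h2, h3⟩ <;> exact ⟨i, h1, h3, h2⟩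

theorem mk_le_sum_of_strictMono {α ι : Type u} [LinearOrder α] [WellFoundedLT α] [NoMaxOrder α]
    [LinearOrder ι] [WellFoundedLT ι] {E : α → ι → Bool}
    (hE : StrictMono fun i => toLex (E i)) :
    #α ≤ sum fun δ : ι => #(Iio δ → Bool) := by
  let := SuccOrder.ofLinearWellFoundedLT α
  -- `δ i` is where `E i` first differs from `E (succ i)`; on each fiber of `δ`, the map
  -- `i ↦ E i ↾ δ i` is injective, since `E j` for `j > i` cannot fall below `E (succ i)`.
  choose δ hδ hδlt using fun i => Pi.toLex_lt_toLex_iff.1 (hE (Order.lt_succ i))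
  simp only [Bool.lt_iff] at hδlt
  have key : ∀ i j, i < j → δ i = δ j → ¬ ∀ γ < δ i, E i γ = E j γ := by
    intro i j hij hδij hagree
    have hlt : toLex (E j) < toLex (E (Order.succ i)) :=
      ⟨δ i, fun γ hγ => (hagree γ hγ).symm.trans (hδ i γ hγ),
        Bool.lt_iff.2 ⟨hδij ▸ (hδlt j).1, (hδlt i).2⟩⟩
    exact (hE.monotone (Order.succ_le_of_lt hij)).not_gt hlt
  calc #α = #(Σ d, {i // δ i = d}) := (mk_congr (Equiv.sigmaFiberEquiv δ)).symm
    _ = sum fun d => #{i // δ i = d} := mk_sigma _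
    _ ≤ _ := sum_le_sum _ _ fun d => mk_le_of_injective
        (f := fun i : {i // δ i = d} => fun γ : Iio d => E i γ) ?_
  rintro ⟨i, rfl⟩ ⟨j, hj⟩ h
  have hagree : ∀ γ < δ i, E i γ = E j γ := fun γ hγ => congrFun h ⟨γ, hγ⟩
  rcases lt_trichotomy i j with hij | rfl | hij
  · exact absurd hagree (key i j hij hj.symm)
  · rfl
  · exact absurd (fun γ hγ => (hagree γ (hj ▸ hγ)).symm) (key j i hij hj)

section Cardinal

variable {κ : Cardinal.{0}}

theorem I.mk_Iio_lt (i : I κ) : #(Iio i) < κ := by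
  simpa using Cardinal.mk_Iio_lt i (by simp)

theorem I.mk_Iic_lt (hκ : ℵ₀ ≤ κ) (i : I κ) : #(Iic i) < κ := by
  rw [← Iio_insert]
  exact mk_insert_le.trans_lt (add_lt_of_lt hκ (I.mk_Iio_lt i) (one_lt_aleph0.trans_le hκ))

theorem exists_lt_mem_of_mk_eq (hκ : ℵ₀ ≤ κ) {H : Set (I κ)} (hH : #H = κ) (i : I κ) :
    ∃ j ∈ H, i < j := by
  by_contra! h
  exact (hH ▸ (mk_le_mk_of_subset h).trans_lt (I.mk_Iic_lt hκ i)).false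

theorem exists_forall_lt_of_mk_lt (hκ : κ.IsRegular) {s : Set (I κ)} (hs : #s < κ) :
    ∃ b, ∀ t ∈ s, t < b := by
  have : ¬ IsCofinal s := fun hcof =>
    (Order.cof_le hcof).not_gt (by rwa [Ordinal.cof_toType, hκ.cof_ord])
  simpa [IsCofinal] using this

theorem IsWeaklyCompact.isRegular (hwc : IsWeaklyCompact κ) : κ.IsRegular := by
  refine ⟨hwc.1.le, ?_⟩
  rw [← Ordinal.cof_toType, Order.le_cof_iff]
  intro s hs
  by_contra! hlt
  choose g hgs hg using hs
  obtain ⟨H, hH, b, hhom⟩ := hwc.2 fun i j => decide (g i = g j)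
  suffices #H < κ from hH.not_lt this
  cases b
  · have hinj : InjOn g H := by
      intro i hi j hj hij
      by_contra hne
      rcases lt_or_gt_of_ne hne with h | h
      · simpa [hij] using hhom i hi j hj h
      · simpa [hij] using hhom j hj i hi h
    rw [← mk_image_eq_of_injOn g H hinj]
    exact (mk_le_mk_of_subset (image_subset_iff.2 fun i _ => hgs i)).trans_lt hlt
  · have : Nonempty (I κ) := nonempty_ord_toType (aleph0_pos.trans hwc.1).ne'
    obtain ⟨i₀, hi₀, -⟩ := exists_lt_mem_of_mk_eq hwc.1.le hH (Classical.arbitrary _)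
    have hconst : ∀ j ∈ H, g j = g i₀ := by
      intro j hj
      rcases lt_trichotomy j i₀ with h | rfl | h
      · simpa using hhom j hj i₀ hi₀ h
      · rfl
      · simpa [eq_comm] using hhom i₀ hi₀ j hj h
    exact (mk_le_mk_of_subset fun j hj => (hg j).trans (hconst j hj).le).trans_lt
      (I.mk_Iic_lt hwc.1.le _)

theorem IsWeaklyCompact.mk_fun_bool_lt (hwc : IsWeaklyCompact κ) {ι : Type} [LinearOrder ι]
    [WellFoundedLT ι] (hι : #ι < κ) (hpow : ∀ δ : ι, #(Iio δ → Bool) < κ) :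
    #(ι → Bool) < κ := by
  classical
  by_contra! hle
  obtain ⟨e⟩ : Nonempty (I κ ↪ (ι → Bool)) := by rwa [← le_def, mk_ord_toType]
  obtain ⟨H, hH, b, hhom⟩ := hwc.2 fun i j => decide (toLex (e i) < toLex (e j))
  have : NoMaxOrder H := ⟨fun i =>
    let ⟨j, hj, hij⟩ := exists_lt_mem_of_mk_eq hwc.1.le hH i; ⟨⟨j, hj⟩, hij⟩⟩
  -- On a decreasing homogeneous set, flipping all bits makes the sequence increasing.
  obtain ⟨E, hE⟩ : ∃ E : H → ι → Bool, StrictMono fun i => toLex (E i) := by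
    cases b
    · refine ⟨fun i γ => !e i γ, fun i j hij => toLex_not_lt_toLex_not.2 ?_⟩
      refine lt_of_le_of_ne (not_lt.1 (decide_eq_false_iff_not.1 (hhom i i.2 j j.2 hij)))
        fun h => ?_
      exact hij.ne' (Subtype.ext (e.injective (toLex.injective h)))
    · exact ⟨fun i => e i, fun i j hij =>
      (decide_eq_true_iff (p := toLex (e i) < toLex (e j))).1 (hhom i i.2 j j.2 hij)⟩
  exact (hH ▸ (mk_le_sum_of_strictMono hE).trans_lt
    (sum_lt_of_isRegular hwc.isRegular hι hpow)).false

theorem IsWeaklyCompact.isStrongPrelimit (hwc : IsWeaklyCompact κ) : IsStrongPrelimit κ := by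
  intro x
  induction x using WellFoundedLT.induction with
  | _ x ih =>
  intro hx
  have hpow : ∀ δ : I x, #(Iio δ → Bool) < κ := fun δ => by
    simpa using ih _ (I.mk_Iio_lt δ) ((I.mk_Iio_lt δ).trans hx)
  simpa using hwc.mk_fun_bool_lt (by simpa using hx) hpow

theorem IsWeaklyCompact.isInaccessible (hwc : IsWeaklyCompact κ) : κ.IsInaccessible :=
  ⟨hwc.1, hwc.isRegular.le_cof_ord, hwc.isStrongPrelimit⟩

end Cardinal

section Cylinders

variable {κ : Cardinal.{0}} {A : Type}

theorem mem_cyl_self (x : Sp κ A) (ξ : I κ) : x ∈ cyl κ A x ξ := fun _ _ => rfl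

theorem cyl_subset_of_mem {x z : Sp κ A} {ξ : I κ} (h : z ∈ cyl κ A x ξ) :
    cyl κ A z ξ ⊆ cyl κ A x ξ := fun _ hy β hβ => (hy β hβ).trans (h β hβ)

theorem cyl_anti (x : Sp κ A) {ξ ξ' : I κ} (h : ξ ≤ ξ') :
    cyl κ A x ξ' ⊆ cyl κ A x ξ :=
  fun _ hy β hβ => hy β (hβ.trans_le h)

theorem openK_cyl (x : Sp κ A) (ξ : I κ) : OpenK κ A (cyl κ A x ξ) :=
  .basic _ ⟨x, ξ, rfl⟩

theorem OpenK.exists_cyl_subset [Nonempty (I κ)] {U : Set (Sp κ A)} (hU : OpenK κ A U)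
    {z : Sp κ A} (hz : z ∈ U) : ∃ ξ, cyl κ A z ξ ⊆ U := by
  induction hU with
  | basic s hs =>
    obtain ⟨x, ξ, rfl⟩ := hs
    exact ⟨ξ, cyl_subset_of_mem hz⟩
  | univ => exact ⟨Classical.arbitrary _, subset_univ _⟩
  | inter s t _ _ ihs iht =>
    obtain ⟨ξ, hξ⟩ := ihs hz.1
    obtain ⟨ξ', hξ'⟩ := iht hz.2
    exact ⟨max ξ ξ', subset_inter ((cyl_anti z (le_max_left _ _)).trans hξ)
      ((cyl_anti z (le_max_right _ _)).trans hξ')⟩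
  | sUnion 𝒮 _ ih =>
    obtain ⟨s, hs, hzs⟩ := hz
    obtain ⟨ξ, hξ⟩ := ih s hs hzs
    exact ⟨ξ, hξ.trans (subset_sUnion_of_mem hs)⟩

theorem NwdK.exists_cyl_inter_eq_empty [Nonempty (I κ)] {f : Set (Sp κ A)} (hf : NwdK κ A f)
    (z : Sp κ A) (η : I κ) : ∃ w ∈ cyl κ A z η, ∃ ℓ, cyl κ A w ℓ ∩ f = ∅ := by
  let := bt κ A
  have hnot : ¬ cyl κ A z η ⊆ closure f := fun hsub =>
    (hf ▸ interior_maximal hsub (openK_cyl z η) :) (mem_cyl_self z η)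
  obtain ⟨w, hwz, hwf⟩ := not_subset.1 hnot
  obtain ⟨ℓ, hℓ⟩ := OpenK.exists_cyl_subset isClosed_closure.isOpen_compl hwf
  exact ⟨w, hwz, ℓ, eq_empty_of_forall_notMem fun y hy => hℓ hy.1 (subset_closure hy.2)⟩

theorem exists_mem_cyl_of_coherent [Nonempty A] {s : Set (I κ)} {k : I κ → I κ}
    {t : I κ → Sp κ A} (ht : ∀ m ∈ s, ∀ n ∈ s, m < n → t n ∈ cyl κ A (t m) (k m)) :
    ∃ z, ∀ m ∈ s, z ∈ cyl κ A (t m) (k m) := by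
  classical
  refine ⟨fun γ => if h : ∃ m ∈ s, γ < k m then t h.choose γ else Classical.arbitrary A,
    fun m hm γ hγ => ?_⟩
  have h : ∃ m ∈ s, γ < k m := ⟨m, hm, hγ⟩
  obtain ⟨hm', hγ'⟩ := h.choose_spec
  simp only [dif_pos h]
  rcases lt_trichotomy m h.choose with hlt | heq | hlt
  · exact ht m hm _ hm' hlt γ hγ
  · rw [← heq]
  · exact (ht _ hm' m hm hlt γ hγ').symm

end Cylinders

theorem xadd_xadd_cancel_right {κ : Cardinal.{0}} (x y : Sp κ Bool) :
    xadd κ (xadd κ x y) y = x := by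
  funext i
  simp [xadd]

theorem xadd_mem_cyl {κ : Cardinal.{0}} {x y t a : Sp κ Bool} {ξ : I κ}
    (hx : x ∈ cyl κ Bool t ξ) (hy : y ∈ cyl κ Bool a ξ) :
    xadd κ x y ∈ cyl κ Bool (xadd κ t a) ξ := fun β hβ => by
  simp [xadd, hx β hβ, hy β hβ]

section Inaccessible

variable {κ : Cardinal.{0}}

theorem NwdK.exists_level_uniform (hκ : κ.IsInaccessible) {f : Set (Sp κ Bool)}
    (hf : NwdK κ Bool f) (η : I κ) :
    ∃ β, ∀ z, ∃ w ∈ cyl κ Bool z η, cyl κ Bool w β ∩ f = ∅ := by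
  have : Nonempty (I κ) := nonempty_ord_toType hκ.ne_zero
  let extend (r : Iio η → Bool) : Sp κ Bool :=
    fun γ => if h : γ < η then r ⟨γ, h⟩ else false
  -- There are only `2 ^ #(Iio η) < κ` patterns below `η`, so one level bounds all of them.
  choose w hw ℓ hℓ using fun r => hf.exists_cyl_inter_eq_empty (extend r) η
  have hsmall : #(range ℓ) < κ := by
    refine mk_range_le.trans_lt ?_
    simpa using hκ.isStrongLimit.isStrongPrelimit (I.mk_Iio_lt η)
  obtain ⟨β, hβ⟩ := exists_forall_lt_of_mk_lt hκ.isRegular hsmall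
  refine ⟨β, fun z => ⟨w fun γ => z γ, fun γ hγ => ?_, ?_⟩⟩
  · simpa [extend, hγ] using hw (fun γ => z γ) γ hγ
  · exact subset_eq_empty (inter_subset_inter_left _ (cyl_anti _ (hβ _ (mem_range_self _)).le))
      (hℓ _)

theorem exists_escaping_levels (hκ : κ.IsInaccessible) {f : I κ → Set (Sp κ Bool)}
    (hf : ∀ n, NwdK κ Bool (f n)) :
    ∃ k : I κ → I κ, ∀ n z, ∃ w, (∀ m < n, w ∈ cyl κ Bool z (k m)) ∧
      cyl κ Bool w (k n) ∩ f n = ∅ := by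
  have : Nonempty (I κ) := nonempty_ord_toType hκ.ne_zero
  refine exists_fun_forall_of_step
    (fun n (g : I κ → I κ) c => ∀ z, ∃ w, (∀ m < n, w ∈ cyl κ Bool z (g m)) ∧
      cyl κ Bool w c ∩ f n = ∅)
    (fun n g g' hgg' c hc z => by
      obtain ⟨w, hwz, hwf⟩ := hc z
      exact ⟨w, fun m hm => hgg' m hm ▸ hwz m hm, hwf⟩)
    (fun n g _ => by
      obtain ⟨K, hK⟩ := exists_forall_lt_of_mk_lt hκ.isRegular
        (mk_image_le.trans_lt (I.mk_Iio_lt n) : #(g '' Iio n) < κ)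
      obtain ⟨β, hβ⟩ := (hf n).exists_level_uniform hκ K
      refine ⟨β, fun z => ?_⟩
      obtain ⟨w, hwz, hwf⟩ := hβ z
      exact ⟨w, fun m hm => cyl_anti z (hK _ (mem_image_of_mem g hm)).le hwz, hwf⟩)

end Inaccessible

theorem exists_coherent_translates {κ : Cardinal.{0}} {f : I κ → Set (Sp κ Bool)}
    {k : I κ → I κ} (hk : ∀ n z, ∃ w, (∀ m < n, w ∈ cyl κ Bool z (k m)) ∧
      cyl κ Bool w (k n) ∩ f n = ∅) (a : I κ → Sp κ Bool) :
    ∃ t : I κ → Sp κ Bool, ∀ n, (∀ m < n, t n ∈ cyl κ Bool (t m) (k m)) ∧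
      cyl κ Bool (xadd κ (t n) (a n)) (k n) ∩ f n = ∅ := by
  refine exists_fun_forall_of_step (fun n g c => (∀ m < n, c ∈ cyl κ Bool (g m) (k m)) ∧
      cyl κ Bool (xadd κ c (a n)) (k n) ∩ f n = ∅)
    (fun n g g' hgg' c hc => ⟨fun m hm => hgg' m hm ▸ hc.1 m hm, hc.2⟩)
    (fun n g hg => ?_)
  obtain ⟨z, hz⟩ := exists_mem_cyl_of_coherent (s := Iio n) (k := k) (t := g)
    fun m _ l hl hml => (hg l hl).1 m hml
  obtain ⟨w, hwz, hwf⟩ := hk n (xadd κ z (a n))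
  refine ⟨xadd κ w (a n), fun m hm => ?_, by rwa [xadd_xadd_cancel_right]⟩
  have := xadd_mem_cyl (hwz m hm) (mem_cyl_self (a n) (k m))
  rw [xadd_xadd_cancel_right] at this
  exact cyl_subset_of_mem (hz m hm) this

theorem SNullK.exists_cover_fibers {κ : Cardinal.{0}} {A : Type} {S : Set (Sp κ A)}
    (hS : SNullK κ A S) (e : I κ ≃ I κ × I κ) (ξ : I κ → I κ) :
    ∃ a : I κ → Sp κ A, ∀ y ∈ S, ∀ m, ∃ n, (e n).1 = m ∧
      y ∈ cyl κ A (a n) (ξ n) := by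
  choose b hb using fun m => hS fun α => ξ (e.symm (m, α))
  refine ⟨fun n => b (e n).1 (e n).2, fun y hy m => ?_⟩
  obtain ⟨α, hα⟩ := mem_iUnion.1 (hb m hy)
  exact ⟨e.symm (m, α), by simp, by simpa using hα⟩

theorem stmt6 (κ : Cardinal.{0}) (hwc : IsWeaklyCompact κ)
    (S : Set (Sp κ Bool)) (hS : SNullK κ Bool S) :
    ∀ F, MeagreK κ Bool F → ∃ x, (xadd κ x '' S) ∩ F = ∅ := by
  rintro F ⟨f, hf, rfl⟩
  have hκ := hwc.isInaccessible
  obtain ⟨e⟩ : Nonempty (I κ ≃ I κ × I κ) :=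
    Cardinal.eq.1 (by simp [mul_eq_self hκ.aleph0_lt.le])
  obtain ⟨k, hk⟩ := exists_escaping_levels hκ fun n => hf (e n).1
  obtain ⟨a, ha⟩ := hS.exists_cover_fibers e k
  obtain ⟨t, ht⟩ := exists_coherent_translates hk a
  obtain ⟨x, hx⟩ := exists_mem_cyl_of_coherent (s := univ) fun m _ n _ hmn => (ht n).1 m hmn
  refine ⟨x, eq_empty_of_forall_notMem ?_⟩
  rintro _ ⟨⟨y, hy, rfl⟩, hyF⟩
  obtain ⟨m, hm⟩ := mem_iUnion.1 hyF
  obtain ⟨n, rfl, hyn⟩ := ha y hy m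
  exact (ht n).2.subset ⟨xadd_mem_cyl (hx n trivial) hyn, hm⟩

end GenSp
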